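/- Let A_0,…,A_D be a P-polynomial association scheme, i.e. A_i = v_i(A_1) where v_i is a univariate real polynomial of degree i, and let Ã_0,…,Ã_{D̃} be a P-polynomial association scheme with Ã_j = ṽ_j(Ã_1), deg ṽ_j = j. Then the direct product scheme given by A_{ij} = A_i ⊗ Ã_j, for (i,j) ∈ D = {0,…,D}×{0,…,D̃}, is a bivariate P-polynomial association scheme of type (0,0) on D; explicitly, D is (0,0)-compatible, and A_{ij} = v_{ij}(A_{10}, A_{01}) where v_{ij}(x,y) = v_i(x) ṽ_j(y) is a (0,0)-compatible bivariate polynomial of degree (i,j). -/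

import Mathlib

open Matrix Finset
open scoped Classical

noncomputable section

/-- Exponent vector of the monomial `x^m * y^n` in `MvPolynomial (Fin 2) ℝ`. -/
def mexp (m n : ℕ) : Fin 2 →₀ ℕ := Finsupp.single 0 m + Finsupp.single 1 n

/-- The partial order `⪯_{(α,β)}` on `ℕ × ℕ`. -/
def abLE (a b : ℝ) (p q : ℕ × ℕ) : Prop :=
  (p.1 : ℝ) + a * p.2 ≤ (q.1 : ℝ) + a * q.2 ∧
  b * p.1 + (p.2 : ℝ) ≤ b * q.1 + (q.2 : ℝ)

/-- An `(α,β)`-compatible bivariate polynomial of degree `(i,j)`. -/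
def CompatPoly (a b : ℝ) (ij : ℕ × ℕ) (v : MvPolynomial (Fin 2) ℝ) : Prop :=
  v.coeff (mexp ij.1 ij.2) ≠ 0 ∧
  ∀ m n : ℕ, v.coeff (mexp m n) ≠ 0 → abLE a b (m, n) ij

/-- An `(α,β)`-compatible subset of `ℕ × ℕ`. -/
def CompatSet (a b : ℝ) (D : Set (ℕ × ℕ)) : Prop :=
  ∀ p q : ℕ × ℕ, q ∈ D → abLE a b p q → p ∈ D

/-- Evaluation `v(M,N) = Σ c_{mn} M^m N^n` of a bivariate polynomial at two matrices. -/
def evalMat {V : Type*} [Fintype V] [DecidableEq V]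
    (v : MvPolynomial (Fin 2) ℝ) (M N : Matrix V V ℝ) : Matrix V V ℝ :=
  ∑ d ∈ v.support, v.coeff d • (M ^ d 0 * N ^ d 1)

/-- A symmetric association scheme whose adjacency matrices are labeled by a
finite subset `D` of `ℕ × ℕ`, with identity label `(0,0)` and given intersection numbers. -/
structure BivScheme (V : Type*) [Fintype V] [DecidableEq V] (D : Finset (ℕ × ℕ)) where
  A : ℕ × ℕ → Matrix V V ℝ
  mem00 : (0, 0) ∈ D
  nonzero : ∀ p ∈ D, A p ≠ 0
  entries : ∀ p ∈ D, ∀ x y, A p x y = 0 ∨ A p x y = 1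
  identity : A (0, 0) = 1
  sum_eq : ∑ p ∈ D, A p = Matrix.of fun _ _ => (1 : ℝ)
  symm : ∀ p ∈ D, (A p)ᵀ = A p
  inter : ℕ × ℕ → ℕ × ℕ → ℕ × ℕ → ℝ
  mul_eq : ∀ p ∈ D, ∀ q ∈ D, A p * A q = ∑ r ∈ D, inter p q r • A r
  comm : ∀ p ∈ D, ∀ q ∈ D, A p * A q = A q * A p

/-- Bivariate `P`-polynomial association scheme of type `(α,β)` on `D`
(with the given labeling). -/
def BivPPoly {V : Type*} [Fintype V] [DecidableEq V] {D : Finset (ℕ × ℕ)}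
    (S : BivScheme V D) (a b : ℝ) : Prop :=
  CompatSet a b ↑D ∧
  ∀ p ∈ D, ∃ v : MvPolynomial (Fin 2) ℝ, CompatPoly a b p v ∧
    S.A p = evalMat v (S.A (1, 0)) (S.A (0, 1))

/-- A symmetric association scheme with adjacency matrices indexed by a finite
type `ι`, identity label `i0`, and given intersection numbers. -/
structure Scheme (V : Type*) [Fintype V] [DecidableEq V] (ι : Type*) [Fintype ι] where
  A : ι → Matrix V V ℝ
  i0 : ι
  nonzero : ∀ i, A i ≠ 0
  entries : ∀ i x y, A i x y = 0 ∨ A i x y = 1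
  identity : A i0 = 1
  sum_eq : ∑ i, A i = Matrix.of fun _ _ => (1 : ℝ)
  symm : ∀ i, (A i)ᵀ = A i
  inter : ι → ι → ι → ℝ
  mul_eq : ∀ i j, A i * A j = ∑ k, inter i j k • A k
  comm : ∀ i j, A i * A j = A j * A i

/-- Entrywise (Hadamard-product) evaluation of a bivariate polynomial at two matrices. -/
def evalHad {V : Type*} (v : MvPolynomial (Fin 2) ℝ) (M N : Matrix V V ℝ) :
    Matrix V V ℝ :=
  Matrix.of fun x y =>
    MvPolynomial.eval (fun t : Fin 2 => if t = 0 then M x y else N x y) v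

/-- Bivariate Q-polynomial property of type `(α,β)` on `D*` for a family of
idempotents `E` of an association scheme on a vertex set of size `v = Fintype.card V`:
`D*` is `(α,β)`-compatible and `v·E_{mn} = v*_{mn}(v·E_{10}, v·E_{01})` under the
Hadamard product, with `v*_{mn}` an `(α,β)`-compatible polynomial of degree `(m,n)`. -/
def BivQPoly {V : Type*} [Fintype V] [DecidableEq V] (Dstar : Finset (ℕ × ℕ))
    (E : ℕ × ℕ → Matrix V V ℝ) (a b : ℝ) : Prop :=
  CompatSet a b ↑Dstar ∧
  ∀ p ∈ Dstar, ∃ w : MvPolynomial (Fin 2) ℝ, CompatPoly a b p w ∧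
    (Fintype.card V : ℝ) • E p =
      evalHad w ((Fintype.card V : ℝ) • E (1, 0)) ((Fintype.card V : ℝ) • E (0, 1))

open scoped Kronecker

lemma mexp_apply_zero (m n : ℕ) : mexp m n 0 = m := by
  simp [mexp, Finsupp.single_apply]
lemma mexp_apply_one (m n : ℕ) : mexp m n 1 = n := by
  simp [mexp, Finsupp.single_apply]
lemma mexp_inj {a b c d : ℕ} (h : mexp a b = mexp c d) : a = c ∧ b = d :=
  ⟨by rw [← mexp_apply_zero a b, h, mexp_apply_zero],
   by rw [← mexp_apply_one a b, h, mexp_apply_one]⟩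
lemma eq_mexp (d : Fin 2 →₀ ℕ) : d = mexp (d 0) (d 1) := by
  ext a
  fin_cases a
  · exact (mexp_apply_zero _ _).symm
  · exact (mexp_apply_one _ _).symm
lemma prod_rep (p q : Polynomial ℝ) :
    (Polynomial.aeval (MvPolynomial.X 0 : MvPolynomial (Fin 2) ℝ) p *
      Polynomial.aeval (MvPolynomial.X 1 : MvPolynomial (Fin 2) ℝ) q)
    = ∑ x ∈ Finset.range (p.natDegree + 1) ×ˢ Finset.range (q.natDegree + 1),
        MvPolynomial.monomial (mexp x.1 x.2) (p.coeff x.1 * q.coeff x.2) := by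
  rw [Polynomial.aeval_eq_sum_range (p := p), Polynomial.aeval_eq_sum_range (p := q),
    Finset.sum_mul_sum, ← Finset.sum_product']
  refine Finset.sum_congr rfl fun x _ => ?_
  rw [smul_mul_smul_comm, MvPolynomial.X_pow_eq_monomial, MvPolynomial.X_pow_eq_monomial,
    MvPolynomial.monomial_mul, MvPolynomial.smul_monomial, smul_eq_mul, mul_one, mexp]
  rw [mul_one]
lemma coeff_prod_rep (p q : Polynomial ℝ) (m n : ℕ) :
    MvPolynomial.coeff (mexp m n)
      (Polynomial.aeval (MvPolynomial.X 0 : MvPolynomial (Fin 2) ℝ) p *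
        Polynomial.aeval (MvPolynomial.X 1 : MvPolynomial (Fin 2) ℝ) q)
    = p.coeff m * q.coeff n := by
  rw [prod_rep, MvPolynomial.coeff_sum]
  by_cases h : m ≤ p.natDegree ∧ n ≤ q.natDegree
  · rw [Finset.sum_eq_single (m, n)]
    · rw [MvPolynomial.coeff_monomial, if_pos rfl]
    · intro b _ hb
      rw [MvPolynomial.coeff_monomial, if_neg]
      intro he
      obtain ⟨h1, h2⟩ := mexp_inj he
      exact hb (Prod.ext h1 h2)
    · intro hm
      exact absurd (Finset.mem_product.2 ⟨Finset.mem_range.2 (Nat.lt_succ_of_le h.1),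
        Finset.mem_range.2 (Nat.lt_succ_of_le h.2)⟩) hm
  · have hz : p.coeff m * q.coeff n = 0 := by
      rcases not_and_or.1 h with h' | h'
      · rw [Polynomial.coeff_eq_zero_of_natDegree_lt (lt_of_not_ge h'), zero_mul]
      · rw [Polynomial.coeff_eq_zero_of_natDegree_lt (lt_of_not_ge h'), mul_zero]
    rw [hz]
    refine Finset.sum_eq_zero fun b hb => ?_
    rw [MvPolynomial.coeff_monomial, if_neg]
    intro he
    obtain ⟨h1, h2⟩ := mexp_inj he
    obtain ⟨hb1, hb2⟩ := Finset.mem_product.1 hb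
    exact h ⟨h1 ▸ Nat.lt_succ_iff.1 (Finset.mem_range.1 hb1),
      h2 ▸ Nat.lt_succ_iff.1 (Finset.mem_range.1 hb2)⟩
lemma evalMat_prod {V : Type*} [Fintype V] [DecidableEq V]
    (p q : Polynomial ℝ) (M N : Matrix V V ℝ) :
    evalMat (Polynomial.aeval (MvPolynomial.X 0 : MvPolynomial (Fin 2) ℝ) p *
      Polynomial.aeval (MvPolynomial.X 1 : MvPolynomial (Fin 2) ℝ) q) M N =
      Polynomial.aeval M p * Polynomial.aeval N q := by
  set P := Polynomial.aeval (MvPolynomial.X 0 : MvPolynomial (Fin 2) ℝ) p *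
      Polynomial.aeval (MvPolynomial.X 1 : MvPolynomial (Fin 2) ℝ) q with hP
  have hsub : P.support ⊆ (Finset.range (p.natDegree + 1) ×ˢ
      Finset.range (q.natDegree + 1)).image (fun x => mexp x.1 x.2) := by
    intro d hd
    have hc : P.coeff d ≠ 0 := MvPolynomial.mem_support_iff.1 hd
    rw [eq_mexp d, coeff_prod_rep] at hc
    refine Finset.mem_image.2 ⟨(d 0, d 1), Finset.mem_product.2
      ⟨Finset.mem_range.2 (Nat.lt_succ_of_le (Polynomial.le_natDegree_of_ne_zero
        fun hz => hc (by rw [hz, zero_mul]))),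
       Finset.mem_range.2 (Nat.lt_succ_of_le (Polynomial.le_natDegree_of_ne_zero
        fun hz => hc (by rw [hz, mul_zero])))⟩, (eq_mexp d).symm⟩
  rw [evalMat, Finset.sum_subset hsub (fun d _ hd => by
    rw [MvPolynomial.notMem_support_iff.1 hd, zero_smul])]
  rw [Finset.sum_image (fun a _ b _ he => Prod.ext (mexp_inj he).1 (mexp_inj he).2)]
  rw [Polynomial.aeval_eq_sum_range (p := p), Polynomial.aeval_eq_sum_range (p := q),
    Finset.sum_mul_sum, ← Finset.sum_product']
  refine Finset.sum_congr rfl fun x _ => ?_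
  rw [coeff_prod_rep, mexp_apply_zero, mexp_apply_one, smul_mul_smul_comm]
lemma kron_one_pow {V₁ V₂ : Type*} [Fintype V₁] [DecidableEq V₁] [Fintype V₂] [DecidableEq V₂]
    (A : Matrix V₁ V₁ ℝ) (m : ℕ) :
    (A ⊗ₖ (1 : Matrix V₂ V₂ ℝ)) ^ m = (A ^ m) ⊗ₖ 1 := by
  induction m with
  | zero => rw [pow_zero, pow_zero, Matrix.one_kronecker_one]
  | succ m ih => rw [pow_succ, pow_succ, ih, ← Matrix.mul_kronecker_mul, Matrix.one_mul]
lemma one_kron_pow {V₁ V₂ : Type*} [Fintype V₁] [DecidableEq V₁] [Fintype V₂] [DecidableEq V₂]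
    (B : Matrix V₂ V₂ ℝ) (m : ℕ) :
    ((1 : Matrix V₁ V₁ ℝ) ⊗ₖ B) ^ m = (1 : Matrix V₁ V₁ ℝ) ⊗ₖ (B ^ m) := by
  induction m with
  | zero => rw [pow_zero, pow_zero, Matrix.one_kronecker_one]
  | succ m ih => rw [pow_succ, pow_succ, ih, ← Matrix.mul_kronecker_mul, Matrix.one_mul]
lemma sum_kron_one {V₁ V₂ : Type*} [Fintype V₁] [DecidableEq V₁] [Fintype V₂] [DecidableEq V₂]
    (s : Finset ℕ) (f : ℕ → Matrix V₁ V₁ ℝ) :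
    (∑ i ∈ s, f i) ⊗ₖ (1 : Matrix V₂ V₂ ℝ) = ∑ i ∈ s, f i ⊗ₖ (1 : Matrix V₂ V₂ ℝ) := by
  induction s using Finset.induction with
  | empty => simp [Matrix.zero_kronecker]
  | insert _ _ h ih => rw [Finset.sum_insert h, Finset.sum_insert h, Matrix.add_kronecker, ih]
lemma one_kron_sum {V₁ V₂ : Type*} [Fintype V₁] [DecidableEq V₁] [Fintype V₂] [DecidableEq V₂]
    (s : Finset ℕ) (f : ℕ → Matrix V₂ V₂ ℝ) :
    (1 : Matrix V₁ V₁ ℝ) ⊗ₖ (∑ i ∈ s, f i) = ∑ i ∈ s, (1 : Matrix V₁ V₁ ℝ) ⊗ₖ f i := by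
  induction s using Finset.induction with
  | empty => simp [Matrix.kronecker_zero]
  | insert _ _ h ih => rw [Finset.sum_insert h, Finset.sum_insert h, Matrix.kronecker_add, ih]
lemma aeval_kron_one {V₁ V₂ : Type*} [Fintype V₁] [DecidableEq V₁] [Fintype V₂] [DecidableEq V₂]
    (p : Polynomial ℝ) (A : Matrix V₁ V₁ ℝ) :
    Polynomial.aeval (A ⊗ₖ (1 : Matrix V₂ V₂ ℝ)) p = (Polynomial.aeval A p) ⊗ₖ 1 := by
  rw [Polynomial.aeval_eq_sum_range (p := p), Polynomial.aeval_eq_sum_range (p := p),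
    sum_kron_one]
  refine Finset.sum_congr rfl fun m _ => ?_
  rw [kron_one_pow, Matrix.smul_kronecker]
lemma aeval_one_kron {V₁ V₂ : Type*} [Fintype V₁] [DecidableEq V₁] [Fintype V₂] [DecidableEq V₂]
    (q : Polynomial ℝ) (B : Matrix V₂ V₂ ℝ) :
    Polynomial.aeval ((1 : Matrix V₁ V₁ ℝ) ⊗ₖ B) q = (1 : Matrix V₁ V₁ ℝ) ⊗ₖ (Polynomial.aeval B q) := by
  rw [Polynomial.aeval_eq_sum_range (p := q), Polynomial.aeval_eq_sum_range (p := q),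
    one_kron_sum]
  refine Finset.sum_congr rfl fun m _ => ?_
  rw [one_kron_pow, Matrix.kronecker_smul]

/-- the direct product of two P-polynomial association schemes is a
bivariate P-polynomial association scheme of type (0,0), with
v_{ij}(x,y) = v_i(x)·ṽ_j(y). -/
theorem direct_product_is_bivPPoly
    {V₁ V₂ : Type*} [Fintype V₁] [DecidableEq V₁] [Fintype V₂] [DecidableEq V₂]
    {D E : ℕ} (hD : 1 ≤ D) (hE : 1 ≤ E)
    (S : Scheme V₁ (Fin (D + 1))) (T : Scheme V₂ (Fin (E + 1)))
    (hS0 : S.i0 = 0) (hT0 : T.i0 = 0)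
    -- the two schemes are P-polynomial
    (vs : Fin (D + 1) → Polynomial ℝ) (ws : Fin (E + 1) → Polynomial ℝ)
    (hvdeg : ∀ i, (vs i).degree = (i : ℕ)) (hwdeg : ∀ j, (ws j).degree = (j : ℕ))
    (hvP : ∀ i, S.A i = Polynomial.aeval (S.A 1) (vs i))
    (hwP : ∀ j, T.A j = Polynomial.aeval (T.A 1) (ws j)) :
    CompatSet 0 0 {p : ℕ × ℕ | p.1 ≤ D ∧ p.2 ≤ E} ∧
    ∀ i : Fin (D + 1), ∀ j : Fin (E + 1),
      CompatPoly 0 0 ((i : ℕ), (j : ℕ))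
        (Polynomial.aeval (MvPolynomial.X 0 : MvPolynomial (Fin 2) ℝ) (vs i) *
          Polynomial.aeval (MvPolynomial.X 1 : MvPolynomial (Fin 2) ℝ) (ws j)) ∧
      S.A i ⊗ₖ T.A j =
        evalMat
          (Polynomial.aeval (MvPolynomial.X 0 : MvPolynomial (Fin 2) ℝ) (vs i) *
            Polynomial.aeval (MvPolynomial.X 1 : MvPolynomial (Fin 2) ℝ) (ws j))
          (S.A 1 ⊗ₖ T.A 0) (S.A 0 ⊗ₖ T.A 1) := by
  have hS1 : S.A 0 = 1 := hS0 ▸ S.identity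
  have hT1 : T.A 0 = 1 := hT0 ▸ T.identity
  constructor
  · intro p q hq hpq
    obtain ⟨h1, h2⟩ := hpq
    simp only [zero_mul, add_zero, zero_add, mul_zero] at h1 h2
    simp only [Set.mem_setOf_eq] at hq ⊢
    exact ⟨le_trans (Nat.cast_le.1 h1) hq.1, le_trans (Nat.cast_le.1 h2) hq.2⟩
  · intro i j
    refine ⟨⟨?_, ?_⟩, ?_⟩
    · rw [coeff_prod_rep]
      exact mul_ne_zero (Polynomial.coeff_ne_zero_of_eq_degree (hvdeg i))
        (Polynomial.coeff_ne_zero_of_eq_degree (hwdeg j))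
    · intro m n hmn
      rw [coeff_prod_rep] at hmn
      have hm : m ≤ (i : ℕ) := by
        have := Polynomial.le_natDegree_of_ne_zero (p := vs i) (n := m)
          (fun h => hmn (by rw [h, zero_mul]))
        rwa [Polynomial.natDegree_eq_of_degree_eq_some (hvdeg i)] at this
      have hn : n ≤ (j : ℕ) := by
        have := Polynomial.le_natDegree_of_ne_zero (p := ws j) (n := n)
          (fun h => hmn (by rw [h, mul_zero]))
        rwa [Polynomial.natDegree_eq_of_degree_eq_some (hwdeg j)] at this
      refine ⟨?_, ?_⟩ <;> simp only [zero_mul, add_zero, zero_add, mul_zero]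
      · exact Nat.cast_le.2 hm
      · exact Nat.cast_le.2 hn
    · rw [evalMat_prod, hS1, hT1, aeval_kron_one, aeval_one_kron, ← hvP, ← hwP,
        ← Matrix.mul_kronecker_mul, Matrix.mul_one, Matrix.one_mul]
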